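/- Let P_F be the pattern for a 3-CNF formula F over variables V and let T be a DTAS with at most m = |C(P_F)| + 3 tile types which self-assembles P_F. Then for every variable v ∈ V there is a unique tile type t_v⁺ ∈ T with color labelled v and a unique tile type t_v⁻ ∈ T with color labelled ¬v, and either t_v⁺(N) = 1 and t_v⁻(N) = 0, or t_v⁺(N) = 0 and t_v⁻(N) = 1, where 0 and 1 are the two south-input glues of the four OR-gate tile types of T. -/

import Mathlib

/-- A colored Wang tile with a color and four glues (north, east, south, west). -/
structure Tile (C G : Type) where
  color : C
  north : G
  east : G
  south : G
  west : G
deriving DecidableEq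

/-- A rectilinear tile assembly system: a finite set of tile types together with
an L-shaped seed, given by its north glues (bottom arm) and east glues (left arm). -/
structure RTAS (C G : Type) where
  tiles : Finset (Tile C G)
  seedN : ℕ → G
  seedE : ℕ → G

/-- A tile assignment for the `M × N` rectangle spanned by the seed:
every tile belongs to the system, west/south glues match the east/north glues of the
west/south neighbours, and the seed glues on the boundary. -/
def IsAssignment {C G : Type} (T : RTAS C G) (M N : ℕ) (f : ℕ → ℕ → Tile C G) : Prop :=
  (∀ x < M, ∀ y < N, f x y ∈ T.tiles) ∧
  (∀ y < N, (f 0 y).west = T.seedE y) ∧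
  (∀ x < M, (f x 0).south = T.seedN x) ∧
  (∀ x, x + 1 < M → ∀ y < N, (f (x + 1) y).west = (f x y).east) ∧
  (∀ x < M, ∀ y, y + 1 < N → (f x (y + 1)).south = (f x y).north)

/-- `T` self-assembles the `M × N` pattern `P` if some tile assignment realizes `P`. -/
def SelfAssembles {C G : Type} (T : RTAS C G) (M N : ℕ) (P : ℕ → ℕ → C) : Prop :=
  ∃ f, IsAssignment T M N f ∧ ∀ x < M, ∀ y < N, (f x y).color = P x y

/-- A directed RTAS: distinct tile types differ in their south or west glue. -/
def DirectedTAS {C G : Type} (T : RTAS C G) : Prop :=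
  ∀ t₁ ∈ T.tiles, ∀ t₂ ∈ T.tiles, t₁ ≠ t₂ → t₁.south ≠ t₂.south ∨ t₁.west ≠ t₂.west

/-- The set of colors occurring in the `M × N` pattern `P`. -/
def colorsOf {C : Type} [DecidableEq C] (M N : ℕ) (P : ℕ → ℕ → C) : Finset C :=
  (Finset.range M ×ˢ Finset.range N).image fun q => P q.1 q.2

/-- The named colors used in the subpatterns of the pattern `P_F` of the paper.
`uniq n` are the "unique" filler colors. -/
inductive PColor where
  | orC | plus | minus
  | Z1 | Z2 | Z3 | Z4
  | aC | bW | bD | cW | cD | dC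
  | arrW (w : Fin 2)
  | arrD (w : Fin 2)
  | upW (s : Fin 2)
  | upD (s : Fin 2)
  | gate (i : Fin 4)
  | X (i : Fin 8)
  | Y (i : Fin 8)
  | varW (v : ℕ)
  | negW (v : ℕ)
  | varAux (v : ℕ)
  | varMod (v : ℕ)
  | varModd (v : ℕ)
  | uniq (n : ℕ)
deriving DecidableEq

/-- The `16 × 2` subpattern `p`: eight `2 × 2` blocks, block `i` having colors
`Xᵢ` (bottom-left), `OR` (bottom-right, top-left) and `Yᵢ` (top-right). -/
def pPat : ℕ → ℕ → PColor := fun x y =>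
  if y = 0 then
    if x % 2 = 0 then PColor.X ⟨x / 2 % 8, Nat.mod_lt _ (by norm_num)⟩ else PColor.orC
  else
    if x % 2 = 0 then PColor.orC else PColor.Y ⟨x / 2 % 8, Nat.mod_lt _ (by norm_num)⟩

/-- The `4 × 4` subpatterns `q₁, …, q₄` (index `idx = 0, …, 3`), with west input
`w = idx / 2` and south input `s = idx % 2` feeding an `OR`-colored position. -/
def qPat (idx : Fin 4) : ℕ → ℕ → PColor := fun x y =>
  let wv : Fin 2 := ⟨idx.val / 2, by have := idx.isLt; omega⟩
  let sv : Fin 2 := ⟨idx.val % 2, Nat.mod_lt _ (by norm_num)⟩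
  match x, y with
  | 0, 0 => PColor.Z1
  | 1, 0 => PColor.Z2
  | 2, 0 => PColor.upD sv
  | 3, 0 => PColor.bD
  | 0, 1 => PColor.Z3
  | 1, 1 => PColor.aC
  | 2, 1 => PColor.upW sv
  | 3, 1 => PColor.bW
  | 0, 2 => PColor.arrD wv
  | 1, 2 => PColor.arrW wv
  | 2, 2 => PColor.orC
  | 3, 2 => if idx.val = 0 then PColor.minus else PColor.plus
  | 0, 3 => PColor.cD
  | 1, 3 => PColor.cW
  | 2, 3 => PColor.gate idx
  | _, _ => PColor.dC

/-- The `6 × 3` subpattern `q₅`: bottom row `a ↑₀ ↑₁ ↑₀ ↑₁ b`, middle row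
`→₀ OR OR OR OR +`, top row `c A B C D d`. -/
def q5Pat : ℕ → ℕ → PColor := fun x y =>
  match y, x with
  | 0, 0 => PColor.aC
  | 0, 1 => PColor.upW 0
  | 0, 2 => PColor.upW 1
  | 0, 3 => PColor.upW 0
  | 0, 4 => PColor.upW 1
  | 0, _ => PColor.bW
  | 1, 0 => PColor.arrW 0
  | 1, 5 => PColor.plus
  | 1, _ => PColor.orC
  | 2, 0 => PColor.cW
  | 2, 1 => PColor.gate 0
  | 2, 2 => PColor.gate 1
  | 2, 3 => PColor.gate 2
  | 2, 4 => PColor.gate 3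
  | _, _ => PColor.dC

/-- A literal: a variable index together with its sign (`true` = positive). -/
abbrev Lit := ℕ × Bool

/-- A clause with three literals. -/
abbrev Clause3 := Lit × Lit × Lit

/-- A boolean formula in 3-CNF over the variables `0, …, numVars - 1`. -/
structure CNF3 where
  numVars : ℕ
  clauses : List Clause3
  wf : ∀ cl ∈ clauses, cl.1.1 < numVars ∧ cl.2.1.1 < numVars ∧ cl.2.2.1 < numVars

/-- Value of a literal under a variable assignment. -/
def litVal (f : ℕ → Bool) (l : Lit) : Bool := if l.2 then f l.1 else ! f l.1

/-- A 3-CNF formula is satisfiable if some assignment makes every clause true. -/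
def CNF3.Satisfiable (F : CNF3) : Prop :=
  ∃ f : ℕ → Bool, ∀ cl ∈ F.clauses,
    (litVal f cl.1 || litVal f cl.2.1 || litVal f cl.2.2) = true

/-- The `2 × 2` subpattern `r₁(v)`. -/
def r1Pat (v : ℕ) : ℕ → ℕ → PColor := fun x y =>
  match x, y with
  | 0, 0 => PColor.Z4
  | 1, 0 => PColor.varW v
  | 0, 1 => PColor.varAux v
  | _, _ => PColor.varMod v

/-- The `2 × 2` subpattern `r₂(v)`. -/
def r2Pat (v : ℕ) : ℕ → ℕ → PColor := fun x y =>
  match x, y with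
  | 0, 0 => PColor.Z4
  | 1, 0 => PColor.negW v
  | 0, 1 => PColor.varAux v
  | _, _ => PColor.varModd v

/-- The `4 × 2` subpattern `r₃(v)`: bottom row `a v ¬v b`, top row `→₀ OR OR +`. -/
def r3Pat (v : ℕ) : ℕ → ℕ → PColor := fun x y =>
  match y, x with
  | 0, 0 => PColor.aC
  | 0, 1 => PColor.varW v
  | 0, 2 => PColor.negW v
  | 0, _ => PColor.bW
  | 1, 0 => PColor.arrW 0
  | 1, 3 => PColor.plus
  | _, _ => PColor.orC

/-- The color of a literal. -/
def litColor (l : Lit) : PColor := if l.2 then PColor.varW l.1 else PColor.negW l.1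

/-- The `5 × 2` subpattern `s(C)` for a clause `C = (c₁ ∨ c₂ ∨ c₃)`:
bottom row `a c₁ c₂ c₃ b`, top row `→₀ OR OR OR +`. -/
def sPat (cl : Clause3) : ℕ → ℕ → PColor := fun x y =>
  match y, x with
  | 0, 0 => PColor.aC
  | 0, 1 => litColor cl.1
  | 0, 2 => litColor cl.2.1
  | 0, 3 => litColor cl.2.2
  | 0, _ => PColor.bW
  | 1, 0 => PColor.arrW 0
  | 1, 4 => PColor.plus
  | _, _ => PColor.orC

/-- A rectangular block: width, height and contents. -/
abbrev PBlock := ℕ × ℕ × (ℕ → ℕ → PColor)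

/-- The list of subpatterns of `P_F`: `p`, `q₁, …, q₅`, then `r₁(v), r₂(v), r₃(v)`
for every variable `v`, then `s(C)` for every clause `C`. -/
def blocksOf (F : CNF3) : List PBlock :=
  [(16, 2, pPat), (4, 4, qPat 0), (4, 4, qPat 1), (4, 4, qPat 2), (4, 4, qPat 3),
    (6, 3, q5Pat)]
    ++ (List.range F.numVars).flatMap
        (fun v => [(2, 2, r1Pat v), (2, 2, r2Pat v), (4, 2, r3Pat v)])
    ++ F.clauses.map (fun cl => (5, 2, sPat cl))

/-- Place the blocks side by side (starting at column `x0`, occupying rows `1, …, h`),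
with one column of unique colors before each block and after the last one; all the
remaining positions carry unique colors (`uniq` of the position code). -/
def place : List PBlock → ℕ → ℕ → ℕ → PColor
  | [], _, x, y => PColor.uniq (Nat.pair x y)
  | b :: bs, x0, x, y =>
      if x0 ≤ x ∧ x < x0 + b.1 ∧ 1 ≤ y ∧ y < 1 + b.2.1 then
        b.2.2 (x - x0) (y - 1)
      else if x < x0 + b.1 + 1 then PColor.uniq (Nat.pair x y)
      else place bs (x0 + b.1 + 1) x y

/-- The pattern `P_F` of the paper, of height `6` and width `45 + 11·|V| + 6·ℓ`. -/
def patF (F : CNF3) : ℕ → ℕ → PColor := fun x y => place (blocksOf F) 1 x y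

/-- The width of the pattern `P_F`. -/
def widthF (F : CNF3) : ℕ := 45 + 11 * F.numVars + 6 * F.clauses.length

/-!
`T` has at most three tile types more than `P_F` has colors, so
`∑ c, (#{tile types of color c} - 1) ≤ 3`: a budget of three surplus tile types.

The eight `Yᵢ` tiles of `p` need eight distinct pairs of `OR` inputs, so there are at least three
`OR` tile types. The four `OR` tiles of `q₁, …, q₄` are pairwise distinct: if the `c` tile is
unique, the four gate tiles of distinct colors above them force this; otherwise `OR` and `c`
exhaust the budget, the input tiles `↑₀, ↑₁, →₀, →₁, b` are unique, and the outputs `-` / `+`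
together with the four input combinations separate the `OR` tiles. Hence there are exactly four
`OR` tile types, every other color has a single tile type, and the `OR` tiles have the north glues
`z`, `o` of the two `↑` tiles as south inputs. In `r₁(v)`, `r₂(v)` the differently colored
top-right tiles share their west input, so `t_v⁺(N) ≠ t_v⁻(N)`; in `r₃(v)` both glues are south
inputs of `OR` tiles, hence they are `z` and `o` in some order.
-/

open Finset

theorem Finset.sum_card_filter_sub_one_le {α β : Type*} [DecidableEq β] (s : Finset α)
    (g : α → β) (S : Finset β) :
    ∑ b ∈ S, (#{a ∈ s | g a = b} - 1) ≤ #s - #(s.image g) := by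
  have hpos : ∀ b ∈ s.image g, 1 ≤ #{a ∈ s | g a = b} := by
    intro b hb
    obtain ⟨a, ha, rfl⟩ := mem_image.mp hb
    exact card_pos.mpr ⟨a, mem_filter.mpr ⟨ha, rfl⟩⟩
  calc ∑ b ∈ S, (#{a ∈ s | g a = b} - 1)
      ≤ ∑ b ∈ s.image g, (#{a ∈ s | g a = b} - 1) := by
        refine sum_le_sum_of_ne_zero fun b _ hb => ?_
        obtain ⟨a, ha⟩ := card_pos.mp (show 0 < #{a ∈ s | g a = b} by omega)
        obtain ⟨has, rfl⟩ := mem_filter.mp ha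
        exact mem_image_of_mem g has
    _ = #s - #(s.image g) := by
        rw [sum_tsub_distrib _ hpos, ← card_eq_sum_card_image, sum_const, smul_eq_mul, mul_one]

variable {C G : Type}

theorem DirectedTAS.eq_of_south_eq_of_west_eq {T : RTAS C G} (hD : DirectedTAS T)
    {t₁ t₂ : Tile C G} (h₁ : t₁ ∈ T.tiles) (h₂ : t₂ ∈ T.tiles) (hs : t₁.south = t₂.south)
    (hw : t₁.west = t₂.west) : t₁ = t₂ := by
  by_contra hne
  exact (hD t₁ h₁ t₂ h₂ hne).elim (· hs) (· hw)

def RTAS.tilesOfColor [DecidableEq C] (T : RTAS C G) (c : C) : Finset (Tile C G) :=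
  {t ∈ T.tiles | t.color = c}

theorem RTAS.mem_tilesOfColor [DecidableEq C] {T : RTAS C G} {c : C} {t : Tile C G} :
    t ∈ T.tilesOfColor c ↔ t ∈ T.tiles ∧ t.color = c :=
  mem_filter

theorem RTAS.eq_of_card_tilesOfColor_le_one [DecidableEq C] {T : RTAS C G} {c : C}
    (hc : #(T.tilesOfColor c) ≤ 1) {t₁ t₂ : Tile C G} (h₁ : t₁ ∈ T.tiles) (h₂ : t₂ ∈ T.tiles)
    (hc₁ : t₁.color = c) (hc₂ : t₂.color = c) : t₁ = t₂ :=
  card_le_one.mp hc _ (mem_tilesOfColor.mpr ⟨h₁, hc₁⟩) _ (mem_tilesOfColor.mpr ⟨h₂, hc₂⟩)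

theorem SelfAssembles.colorsOf_subset [DecidableEq C] {T : RTAS C G} {M N : ℕ} {P : ℕ → ℕ → C}
    (hSA : SelfAssembles T M N P) : colorsOf M N P ⊆ T.tiles.image Tile.color := by
  obtain ⟨f, hf, hc⟩ := hSA
  intro c hc'
  obtain ⟨⟨x, y⟩, hxy, rfl⟩ := mem_image.mp hc'
  simp only [mem_product, mem_range] at hxy
  exact mem_image.mpr ⟨f x y, hf.1 x hxy.1 y hxy.2, hc x hxy.1 y hxy.2⟩

theorem RTAS.sum_card_tilesOfColor_sub_one_le [DecidableEq C] {T : RTAS C G} {k : ℕ}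
    (hT : #T.tiles ≤ #(T.tiles.image Tile.color) + k) (S : Finset C) :
    ∑ c ∈ S, (#(T.tilesOfColor c) - 1) ≤ k := by
  have := T.tiles.sum_card_filter_sub_one_le Tile.color S
  unfold RTAS.tilesOfColor
  omega

/-- `g`, in block coordinates, tiles the `w × h` pattern `B` with tile types of `T` whose glues
match inside the block; nothing is required on the block's boundary. -/
def TilesBlock (T : RTAS C G) (w h : ℕ) (B : ℕ → ℕ → C) (g : ℕ → ℕ → Tile C G) : Prop :=
  (∀ i < w, ∀ j < h, g i j ∈ T.tiles ∧ (g i j).color = B i j) ∧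
  (∀ i j, i + 1 < w → j < h → (g (i + 1) j).west = (g i j).east) ∧
  (∀ i j, i < w → j + 1 < h → (g i (j + 1)).south = (g i j).north)

namespace TilesBlock

variable {T : RTAS C G} {w h w' h' : ℕ} {B B' : ℕ → ℕ → C} {g g' : ℕ → ℕ → Tile C G}

theorem mem (hg : TilesBlock T w h B g) {i j : ℕ} (hi : i < w := by omega)
    (hj : j < h := by omega) : g i j ∈ T.tiles :=
  (hg.1 i hi j hj).1

theorem color (hg : TilesBlock T w h B g) {i j : ℕ} (hi : i < w := by omega)
    (hj : j < h := by omega) : (g i j).color = B i j :=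
  (hg.1 i hi j hj).2

theorem west_eq (hg : TilesBlock T w h B g) {i j : ℕ} (hi : i + 1 < w := by omega)
    (hj : j < h := by omega) : (g (i + 1) j).west = (g i j).east :=
  hg.2.1 i j hi hj

theorem south_eq (hg : TilesBlock T w h B g) {i j : ℕ} (hi : i < w := by omega)
    (hj : j + 1 < h := by omega) : (g i (j + 1)).south = (g i j).north :=
  hg.2.2 i j hi hj

theorem eq_of_north_eq_of_east_eq (hD : DirectedTAS T) (hg : TilesBlock T w h B g)
    (hg' : TilesBlock T w' h' B' g') {i j i' j' : ℕ}
    (hs : (g (i + 1) j).north = (g' (i' + 1) j').north)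
    (hw : (g i (j + 1)).east = (g' i' (j' + 1)).east) (hi : i + 1 < w := by omega)
    (hj : j + 1 < h := by omega) (hi' : i' + 1 < w' := by omega) (hj' : j' + 1 < h' := by omega) :
    g (i + 1) (j + 1) = g' (i' + 1) (j' + 1) :=
  hD.eq_of_south_eq_of_west_eq (hg.mem hi hj) (hg'.mem hi' hj')
    (by rw [hg.south_eq hi hj, hg'.south_eq hi' hj', hs])
    (by rw [hg.west_eq hi hj, hg'.west_eq hi' hj', hw])

theorem eq_of_card_tilesOfColor_le_one [DecidableEq C] {c : C} (hc : #(T.tilesOfColor c) ≤ 1)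
    (hg : TilesBlock T w h B g) (hg' : TilesBlock T w' h' B' g') {i j i' j' : ℕ}
    (hB : B i j = c) (hB' : B' i' j' = c) (hi : i < w := by omega) (hj : j < h := by omega)
    (hi' : i' < w' := by omega) (hj' : j' < h' := by omega) : g i j = g' i' j' :=
  RTAS.eq_of_card_tilesOfColor_le_one hc (hg.mem hi hj) (hg'.mem hi' hj')
    ((hg.color hi hj).trans hB) ((hg'.color hi' hj').trans hB')

end TilesBlock

theorem IsAssignment.tilesBlock {T : RTAS C G} {M N : ℕ} {f : ℕ → ℕ → Tile C G}
    {P B : ℕ → ℕ → C} (hf : IsAssignment T M N f) (hP : ∀ x < M, ∀ y < N, (f x y).color = P x y)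
    {x₀ y₀ w h : ℕ} (hw : x₀ + w ≤ M) (hh : y₀ + h ≤ N)
    (hB : ∀ i < w, ∀ j < h, P (x₀ + i) (y₀ + j) = B i j) :
    TilesBlock T w h B fun i j => f (x₀ + i) (y₀ + j) := by
  obtain ⟨hmem, -, -, hwest, hsouth⟩ := hf
  refine ⟨fun i hi j hj => ⟨hmem _ (by omega) _ (by omega), ?_⟩,
    fun i j hi hj => hwest (x₀ + i) (by omega) (y₀ + j) (by omega),
    fun i j hi hj => hsouth (x₀ + i) (by omega) (y₀ + j) (by omega)⟩
  rw [hP _ (by omega) _ (by omega), hB i hi j hj]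

def blocksWidth (L : List PBlock) : ℕ := (L.map fun b => b.1 + 1).sum

theorem blocksWidth_cons (b : PBlock) (L : List PBlock) :
    blocksWidth (b :: L) = b.1 + 1 + blocksWidth L :=
  rfl

theorem place_append_cons (L₁ L₂ : List PBlock) (b : PBlock) (x₀ : ℕ) {i j : ℕ} (hi : i < b.1)
    (hj : j < b.2.1) : place (L₁ ++ b :: L₂) x₀ (x₀ + blocksWidth L₁ + i) (1 + j) = b.2.2 i j := by
  induction L₁ generalizing x₀ with
  | nil =>
    rw [List.nil_append, show blocksWidth [] = 0 from rfl, add_zero, place, if_pos (by omega)]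
    rw [Nat.add_sub_cancel_left, Nat.add_sub_cancel_left]
  | cons b' L ih =>
    rw [List.cons_append, blocksWidth_cons, show x₀ + (b'.1 + 1 + blocksWidth L) + i =
      x₀ + b'.1 + 1 + blocksWidth L + i by ring, place, if_neg (by omega), if_neg (by omega), ih]

theorem blocksWidth_append (L₁ L₂ : List PBlock) :
    blocksWidth (L₁ ++ L₂) = blocksWidth L₁ + blocksWidth L₂ := by
  simp [blocksWidth]

theorem one_add_blocksWidth_blocksOf (F : CNF3) : 1 + blocksWidth (blocksOf F) = widthF F := by
  have hvars : ∀ n, blocksWidth ((List.range n).flatMap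
      fun v => [(2, 2, r1Pat v), (2, 2, r2Pat v), (4, 2, r3Pat v)]) = 11 * n := by
    intro n
    induction n with
    | zero => rfl
    | succ n ih =>
      rw [List.range_succ, List.flatMap_append, blocksWidth_append, ih]
      show 11 * n + 11 = 11 * (n + 1)
      ring
  have hclauses : blocksWidth (F.clauses.map fun cl => (5, 2, sPat cl)) =
      6 * F.clauses.length := by
    simp [blocksWidth, Function.comp_def, mul_comm]
  rw [blocksOf, blocksWidth_append, blocksWidth_append, hvars, hclauses, widthF]
  simp only [blocksWidth, List.map_cons, List.map_nil, List.sum_cons, List.sum_nil]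
  ring

theorem SelfAssembles.exists_tilesBlock {F : CNF3} {T : RTAS PColor G}
    (hSA : SelfAssembles T (widthF F) 6 (patF F)) {w h : ℕ} {B : ℕ → ℕ → PColor}
    (hb : (w, h, B) ∈ blocksOf F) (hh : h < 6) : ∃ g, TilesBlock T w h B g := by
  obtain ⟨L₁, L₂, hL⟩ := List.mem_iff_append.mp hb
  obtain ⟨f, hf, hc⟩ := hSA
  have hwidth := one_add_blocksWidth_blocksOf F
  rw [hL, blocksWidth_append, blocksWidth_cons] at hwidth
  refine ⟨_, hf.tilesBlock hc (x₀ := 1 + blocksWidth L₁) (y₀ := 1) (by omega) (by omega)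
    fun i hi j hj => ?_⟩
  rw [patF, hL]
  exact place_append_cons L₁ L₂ (w, h, B) 1 hi hj

theorem mem_blocksOf_of_lt_numVars {F : CNF3} {v : ℕ} (hv : v < F.numVars) {b : PBlock}
    (hb : b ∈ [(2, 2, r1Pat v), (2, 2, r2Pat v), (4, 2, r3Pat v)]) : b ∈ blocksOf F :=
  List.mem_append_left _ <| List.mem_append_right _ <|
    List.mem_flatMap.mpr ⟨v, List.mem_range.mpr hv, hb⟩

section Gadgets

-- `g k` tiles `q_{k+1}`; its `OR` tile `g k 2 2` has inputs `↑` at `(2, 1)` and `→` at `(1, 2)`.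
variable {T : RTAS PColor G} {g : Fin 4 → ℕ → ℕ → Tile PColor G}

theorem three_le_card_tilesOfColor_orC (hD : DirectedTAS T) {gp : ℕ → ℕ → Tile PColor G}
    (hp : TilesBlock T 16 2 pPat gp) : 3 ≤ #(T.tilesOfColor .orC) := by
  have hodd : ∀ i : ℕ, (2 * i + 1) % 2 = 1 := by omega
  have hmem : ∀ i j, i < 16 → j < 2 → pPat i j = .orC → gp i j ∈ T.tilesOfColor .orC :=
    fun i j hi hj h => RTAS.mem_tilesOfColor.mpr ⟨hp.mem, (hp.color hi hj).trans h⟩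
  have hinj : Function.Injective fun i : Fin 8 => (gp (2 * i + 1) 0, gp (2 * i) 1) := by
    intro a b hab
    simp only [Prod.mk.injEq] at hab
    have hY := congrArg Tile.color <| hp.eq_of_north_eq_of_east_eq hD hp (i := 2 * a) (j := 0)
      (i' := 2 * b) (j' := 0) (congrArg Tile.north hab.1) (congrArg Tile.east hab.2)
    rw [hp.color, hp.color] at hY
    simp only [pPat, hodd, zero_add, one_ne_zero, if_false, PColor.Y.injEq, Fin.mk.injEq] at hY
    exact Fin.ext (by omega)
  have h8 : 8 ≤ #(T.tilesOfColor .orC) * #(T.tilesOfColor .orC) := by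
    rw [← card_product]
    simpa using card_le_card_of_injOn (s := (univ : Finset (Fin 8))) _ (fun i _ => mem_product.mpr
      ⟨hmem (2 * i + 1) 0 (by omega) (by omega) (by simp [pPat, hodd]),
        hmem (2 * i) 1 (by omega) (by omega) (by simp [pPat])⟩) hinj.injOn
  nlinarith

theorem qUp_eq_of_mod_two_eq (hq : ∀ k, TilesBlock T 4 4 (qPat k) (g k))
    (hup : ∀ s, #(T.tilesOfColor (.upW s)) ≤ 1) {a b : Fin 4} (h : a.val % 2 = b.val % 2) :
    g a 2 1 = g b 2 1 :=
  (hq a).eq_of_card_tilesOfColor_le_one (hup ⟨a % 2, Nat.mod_lt _ (by norm_num)⟩) (hq b) rfl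
    (by simp [qPat, h])

theorem qOr_injective_of_card_cW_le_one (hD : DirectedTAS T)
    (hq : ∀ k, TilesBlock T 4 4 (qPat k) (g k)) (hcW : #(T.tilesOfColor .cW) ≤ 1) :
    Function.Injective fun k => g k 2 2 := by
  intro a b hab
  have hc : g a 1 3 = g b 1 3 := (hq a).eq_of_card_tilesOfColor_le_one hcW (hq b) rfl rfl
  have hgate := congrArg Tile.color <| (hq a).eq_of_north_eq_of_east_eq hD (hq b)
    (i := 1) (j := 2) (i' := 1) (j' := 2) (congrArg Tile.north hab) (congrArg Tile.east hc)
  rw [(hq a).color, (hq b).color] at hgate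
  exact PColor.gate.inj hgate

theorem qOr_injective_of_card_inputs_le_one (hD : DirectedTAS T)
    (hq : ∀ k, TilesBlock T 4 4 (qPat k) (g k)) (hup : ∀ s, #(T.tilesOfColor (.upW s)) ≤ 1)
    (harr : ∀ w, #(T.tilesOfColor (.arrW w)) ≤ 1) (hb : #(T.tilesOfColor .bW) ≤ 1) :
    Function.Injective fun k => g k 2 2 := by
  have hW : ∀ a b : Fin 4, a.val / 2 = b.val / 2 → (g a 1 2).east = (g b 1 2).east := by
    intro a b h
    rw [(hq a).eq_of_card_tilesOfColor_le_one (harr ⟨a / 2, by omega⟩) (hq b)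
      (i' := 1) (j' := 2) rfl (by simp [qPat, h])]
  have hOr : ∀ a b : Fin 4, (g a 2 1).north = (g b 2 1).north →
      (g a 1 2).east = (g b 1 2).east → g a 2 2 = g b 2 2 := fun a b hs hw =>
    (hq a).eq_of_north_eq_of_east_eq hD (hq b) (i := 1) (j := 1) (i' := 1) (j' := 1) hs hw
  -- only `q₁` outputs `-`, so its `OR` tile differs from the other three
  have hout : ∀ k ≠ 0, g 0 2 2 ≠ g k 2 2 := by
    intro k hk h
    have hbk : g 0 3 1 = g k 3 1 := (hq 0).eq_of_card_tilesOfColor_le_one hb (hq k) rfl rfl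
    have hpm := congrArg Tile.color <| (hq 0).eq_of_north_eq_of_east_eq hD (hq k)
      (i := 2) (j := 1) (i' := 2) (j' := 1) (congrArg Tile.north hbk) (congrArg Tile.east h)
    rw [(hq 0).color, (hq k).color] at hpm
    exact hk (by simpa [qPat] using hpm)
  intro a b hab
  by_contra hne
  have hSab : (g a 2 1).north = (g b 2 1).north := by
    rw [← (hq a).south_eq, ← (hq b).south_eq]
    exact congrArg Tile.south hab
  have hWab : (g a 1 2).east = (g b 1 2).east := by
    rw [← (hq a).west_eq, ← (hq b).west_eq]
    exact congrArg Tile.west hab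
  have h02 := congrArg Tile.north (qUp_eq_of_mod_two_eq hq hup (a := 0) (b := 2) rfl)
  have h13 := congrArg Tile.north (qUp_eq_of_mod_two_eq hq hup (a := 1) (b := 3) rfl)
  have h01 := hW 0 1 rfl
  have h23 := hW 2 3 rfl
  -- distinct `a`, `b` differ in `k % 2` or in `k / 2`
  have : (g 0 2 1).north = (g 1 2 1).north ∨ (g 0 1 2).east = (g 2 1 2).east := by
    fin_cases a <;> fin_cases b <;> simp_all
  rcases this with h | h
  · exact hout 1 (by decide) (hOr 0 1 h h01)
  · exact hout 2 (by decide) (hOr 0 2 h02 h)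

theorem qOr_injective (hD : DirectedTAS T)
    (hT : #T.tiles ≤ #(T.tiles.image Tile.color) + 3)
    {gp : ℕ → ℕ → Tile PColor G} (hp : TilesBlock T 16 2 pPat gp)
    (hq : ∀ k, TilesBlock T 4 4 (qPat k) (g k)) : Function.Injective fun k => g k 2 2 := by
  by_cases hcW : #(T.tilesOfColor .cW) ≤ 1
  · exact qOr_injective_of_card_cW_le_one hD hq hcW
  have h3 := three_le_card_tilesOfColor_orC hD hp
  have huniq : ∀ c, c ≠ .orC → c ≠ .cW → #(T.tilesOfColor c) ≤ 1 := by
    intro c hcO hcC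
    have := RTAS.sum_card_tilesOfColor_sub_one_le hT {.orC, .cW, c}
    rw [sum_insert (by simp [hcO.symm]), sum_pair hcC.symm] at this
    omega
  exact qOr_injective_of_card_inputs_le_one hD hq (fun _ => huniq _ (by simp) (by simp))
    (fun _ => huniq _ (by simp) (by simp)) (huniq _ (by simp) (by simp))

theorem four_le_card_tilesOfColor_orC (hq : ∀ k, TilesBlock T 4 4 (qPat k) (g k))
    (hinj : Function.Injective fun k => g k 2 2) : 4 ≤ #(T.tilesOfColor .orC) := by
  simpa using card_le_card_of_injOn (s := univ) (t := T.tilesOfColor .orC) _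
    (fun k _ => RTAS.mem_tilesOfColor.mpr ⟨(hq k).mem, (hq k).color⟩) hinj.injOn

theorem card_tilesOfColor_le_one_of_ne_orC
    (hT : #T.tiles ≤ #(T.tiles.image Tile.color) + 3)
    (h4 : 4 ≤ #(T.tilesOfColor .orC)) {c : PColor} (hc : c ≠ .orC) :
    #(T.tilesOfColor c) ≤ 1 := by
  have := RTAS.sum_card_tilesOfColor_sub_one_le hT {.orC, c}
  rw [sum_pair hc.symm] at this
  omega

theorem exists_qOr_eq_of_color_eq_orC
    (hT : #T.tiles ≤ #(T.tiles.image Tile.color) + 3)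
    (hq : ∀ k, TilesBlock T 4 4 (qPat k) (g k)) (hinj : Function.Injective fun k => g k 2 2)
    {t : Tile PColor G} (ht : t ∈ T.tiles) (hc : t.color = .orC) : ∃ k, g k 2 2 = t := by
  have hsub : univ.map ⟨_, hinj⟩ ⊆ T.tilesOfColor .orC := fun t ht => by
    obtain ⟨k, -, rfl⟩ := mem_map.mp ht
    exact RTAS.mem_tilesOfColor.mpr ⟨(hq k).mem, (hq k).color⟩
  have hle : #(T.tilesOfColor .orC) ≤ #(univ.map ⟨_, hinj⟩) := by
    have := RTAS.sum_card_tilesOfColor_sub_one_le hT {.orC}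
    rw [sum_singleton] at this
    rw [card_map, card_univ, Fintype.card_fin]
    omega
  obtain ⟨k, -, hk⟩ := mem_map.mp <|
    (eq_of_subset_of_card_le hsub hle).symm ▸ RTAS.mem_tilesOfColor.mpr ⟨ht, hc⟩
  exact ⟨k, hk⟩

theorem exists_orC_south_glues (hD : DirectedTAS T) (hq : ∀ k, TilesBlock T 4 4 (qPat k) (g k))
    (hinj : Function.Injective fun k => g k 2 2) (hup : ∀ s, #(T.tilesOfColor (.upW s)) ≤ 1)
    (harr : #(T.tilesOfColor (.arrW 0)) ≤ 1)
    (hOr : ∀ t ∈ T.tiles, t.color = .orC → ∃ k, g k 2 2 = t) :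
    ∃ z o : G, z ≠ o ∧ (∀ t ∈ T.tiles, t.color = .orC → t.south = z ∨ t.south = o) ∧
      (∃ t ∈ T.tiles, t.color = .orC ∧ t.south = z) ∧
      (∃ t ∈ T.tiles, t.color = .orC ∧ t.south = o) := by
  have hsouth : ∀ k, (g k 2 2).south = (g k 2 1).north := fun k => (hq k).south_eq
  refine ⟨(g 0 2 1).north, (g 1 2 1).north, fun h => ?_, fun t ht hc => ?_,
    ⟨g 0 2 2, (hq 0).mem, (hq 0).color, hsouth 0⟩, ⟨g 1 2 2, (hq 1).mem, (hq 1).color, hsouth 1⟩⟩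
  · have harr01 : g 0 1 2 = g 1 1 2 := (hq 0).eq_of_card_tilesOfColor_le_one harr (hq 1) rfl rfl
    have := hinj <| (hq 0).eq_of_north_eq_of_east_eq hD (hq 1) (i := 1) (j := 1) (i' := 1)
      (j' := 1) h (congrArg Tile.east harr01)
    exact absurd this (by decide)
  · obtain ⟨k, rfl⟩ := hOr t ht hc
    rw [hsouth]
    rcases Nat.mod_two_eq_zero_or_one k with h | h
    · exact Or.inl (congrArg Tile.north (qUp_eq_of_mod_two_eq hq hup (b := 0) h))
    · exact Or.inr (congrArg Tile.north (qUp_eq_of_mod_two_eq hq hup (b := 1) h))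

theorem exists_literal_tiles (hD : DirectedTAS T) {v : ℕ} {g₁ g₂ g₃ : ℕ → ℕ → Tile PColor G}
    (h₁ : TilesBlock T 2 2 (r1Pat v) g₁) (h₂ : TilesBlock T 2 2 (r2Pat v) g₂)
    (h₃ : TilesBlock T 4 2 (r3Pat v) g₃) (hpos : #(T.tilesOfColor (.varW v)) ≤ 1)
    (hneg : #(T.tilesOfColor (.negW v)) ≤ 1) (haux : #(T.tilesOfColor (.varAux v)) ≤ 1)
    {z o : G} (hOr : ∀ t ∈ T.tiles, t.color = .orC → t.south = z ∨ t.south = o) :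
    ∃ tp tn : Tile PColor G,
      tp ∈ T.tiles ∧ tp.color = .varW v ∧ (∀ t ∈ T.tiles, t.color = .varW v → t = tp) ∧
      tn ∈ T.tiles ∧ tn.color = .negW v ∧ (∀ t ∈ T.tiles, t.color = .negW v → t = tn) ∧
      ((tp.north = o ∧ tn.north = z) ∨ (tp.north = z ∧ tn.north = o)) := by
  have hne : (g₁ 1 0).north ≠ (g₂ 1 0).north := by
    intro h
    have haux' : g₁ 0 1 = g₂ 0 1 := h₁.eq_of_card_tilesOfColor_le_one haux h₂ rfl rfl
    have hmod := congrArg Tile.color <| h₁.eq_of_north_eq_of_east_eq hD h₂ (i := 0) (j := 0)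
      (i' := 0) (j' := 0) h (congrArg Tile.east haux')
    rw [h₁.color, h₂.color] at hmod
    exact PColor.noConfusion hmod
  have hp : g₃ 1 0 = g₁ 1 0 := h₃.eq_of_card_tilesOfColor_le_one hpos h₁ rfl rfl
  have hn : g₃ 2 0 = g₂ 1 0 := h₃.eq_of_card_tilesOfColor_le_one hneg h₂ rfl rfl
  have hpOr := hOr (g₃ 1 1) h₃.mem h₃.color
  have hnOr := hOr (g₃ 2 1) h₃.mem h₃.color
  rw [h₃.south_eq, hp] at hpOr
  rw [h₃.south_eq, hn] at hnOr
  refine ⟨g₁ 1 0, g₂ 1 0, h₁.mem, h₁.color,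
    fun t ht hc => RTAS.eq_of_card_tilesOfColor_le_one hpos ht h₁.mem hc h₁.color,
    h₂.mem, h₂.color,
    fun t ht hc => RTAS.eq_of_card_tilesOfColor_le_one hneg ht h₂.mem hc h₂.color, ?_⟩
  rcases hpOr with h | h <;> rcases hnOr with h' | h'
  · exact absurd (h.trans h'.symm) hne
  · exact Or.inr ⟨h, h'⟩
  · exact Or.inl ⟨h, h'⟩
  · exact absurd (h.trans h'.symm) hne

end Gadgets

theorem variable_tiles_of_subpatterns_r_general {G : Type}
    (F : CNF3) (T : RTAS PColor G)
    (hD : DirectedTAS T)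
    (hcard : T.tiles.card ≤ (colorsOf (widthF F) 6 (patF F)).card + 3)
    (hSA : SelfAssembles T (widthF F) 6 (patF F)) :
    ∃ z o : G, z ≠ o ∧
      -- z and o are the south-input glues of the OR-gate tile types of T
      (∀ t ∈ T.tiles, t.color = PColor.orC → t.south = z ∨ t.south = o) ∧
      (∃ t ∈ T.tiles, t.color = PColor.orC ∧ t.south = z) ∧
      (∃ t ∈ T.tiles, t.color = PColor.orC ∧ t.south = o) ∧
      ∀ v < F.numVars, ∃ tp tn : Tile PColor G,
        tp ∈ T.tiles ∧ tp.color = PColor.varW v ∧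
        (∀ t ∈ T.tiles, t.color = PColor.varW v → t = tp) ∧
        tn ∈ T.tiles ∧ tn.color = PColor.negW v ∧
        (∀ t ∈ T.tiles, t.color = PColor.negW v → t = tn) ∧
        ((tp.north = o ∧ tn.north = z) ∨ (tp.north = z ∧ tn.north = o)) := by
  have hT : #T.tiles ≤ #(T.tiles.image Tile.color) + 3 :=
    hcard.trans (Nat.add_le_add_right (card_le_card hSA.colorsOf_subset) 3)
  obtain ⟨gp, hp⟩ := hSA.exists_tilesBlock (w := 16) (h := 2) (B := pPat) (by simp [blocksOf])
    (by norm_num)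
  choose g hq using fun k : Fin 4 => hSA.exists_tilesBlock (w := 4) (h := 4) (B := qPat k)
    (List.mem_append_left _ (List.mem_append_left _ (by fin_cases k <;> simp))) (by norm_num)
  have hinj := qOr_injective hD hT hp hq
  have huniq : ∀ c ≠ PColor.orC, #(T.tilesOfColor c) ≤ 1 := fun c =>
    card_tilesOfColor_le_one_of_ne_orC hT (four_le_card_tilesOfColor_orC hq hinj)
  obtain ⟨z, o, hzo, hsouth, hz, ho⟩ := exists_orC_south_glues hD hq hinj
    (fun _ => huniq _ (by simp)) (huniq _ (by simp))
    fun _ => exists_qOr_eq_of_color_eq_orC hT hq hinj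
  refine ⟨z, o, hzo, hsouth, hz, ho, fun v hv => ?_⟩
  obtain ⟨g₁, h₁⟩ := hSA.exists_tilesBlock
    (mem_blocksOf_of_lt_numVars hv (b := (2, 2, r1Pat v)) (by simp)) (by norm_num)
  obtain ⟨g₂, h₂⟩ := hSA.exists_tilesBlock
    (mem_blocksOf_of_lt_numVars hv (b := (2, 2, r2Pat v)) (by simp)) (by norm_num)
  obtain ⟨g₃, h₃⟩ := hSA.exists_tilesBlock
    (mem_blocksOf_of_lt_numVars hv (b := (4, 2, r3Pat v)) (by simp)) (by norm_num)
  exact exists_literal_tiles hD h₁ h₂ h₃ (huniq _ (by simp)) (huniq _ (by simp))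
    (huniq _ (by simp)) hsouth

/-- Lemma on the subpatterns `r₁(v), r₂(v), r₃(v)`: if `T` is a DTAS with at most
`m = |C(P_F)| + 3` tile types which self-assembles `P_F`, then (with `0` and `1`
the two south-input glues of the four OR-gate tile types of `T`) for every
variable `v` there is a unique tile type `t_v⁺` with color `v` and a unique tile
type `t_v⁻` with color `¬v`, and either `t_v⁺(N) = 1` and `t_v⁻(N) = 0`, or
`t_v⁺(N) = 0` and `t_v⁻(N) = 1`. -/
theorem variable_tiles_of_subpatterns_r {G : Type} [DecidableEq G]
    (F : CNF3) (T : RTAS PColor G)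
    (hD : DirectedTAS T)
    (hcard : T.tiles.card ≤ (colorsOf (widthF F) 6 (patF F)).card + 3)
    (hSA : SelfAssembles T (widthF F) 6 (patF F)) :
    ∃ z o : G, z ≠ o ∧
      -- z and o are the south-input glues of the OR-gate tile types of T
      (∀ t ∈ T.tiles, t.color = PColor.orC → t.south = z ∨ t.south = o) ∧
      (∃ t ∈ T.tiles, t.color = PColor.orC ∧ t.south = z) ∧
      (∃ t ∈ T.tiles, t.color = PColor.orC ∧ t.south = o) ∧
      ∀ v < F.numVars, ∃ tp tn : Tile PColor G,
        tp ∈ T.tiles ∧ tp.color = PColor.varW v ∧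
        (∀ t ∈ T.tiles, t.color = PColor.varW v → t = tp) ∧
        tn ∈ T.tiles ∧ tn.color = PColor.negW v ∧
        (∀ t ∈ T.tiles, t.color = PColor.negW v → t = tn) ∧
        ((tp.north = o ∧ tn.north = z) ∨ (tp.north = z ∧ tn.north = o)) :=
  variable_tiles_of_subpatterns_r_general F T hD hcard hSA
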